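/- Let S = diag[s₁,s₂,s₃] be a real diagonal 3×3 matrix. For x = (q, q₄) ∈ ℝ⁴ with q ∈ ℝ³ and q₄ ∈ ℝ, define Q(x) = (q₄² − qᵀq) I₃ + 2qqᵀ + 2q₄ q̂. Then tr(S · Q(x)) = xᵀ B x, where B ∈ ℝ^{4×4} is the block-diagonal matrix with upper-left 3×3 block 2S − tr(S) I₃ and lower-right 1×1 block tr(S). -/
import Mathlib


open Matrix Real

noncomputable section

/-- The space of real 3×3 matrices. -/
abbrev M3 : Type := Matrix (Fin 3) (Fin 3) ℝ

/-- The hat map: the skew-symmetric matrix `q̂` satisfying `q̂ y = q × y`. -/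
def hat (q : Fin 3 → ℝ) : M3 :=
  !![0, -q 2, q 1; q 2, 0, -q 0; -q 1, q 0, 0]

/-- The matrix `Q(x) = (q₄² − qᵀq)I₃ + 2qqᵀ + 2q₄ q̂` associated with
`x = (q, q₄) ∈ ℝ⁴` (for unit `x`, the rotation matrix of the quaternion `x`). -/
noncomputable def quatMatrix (q : Fin 3 → ℝ) (q₄ : ℝ) : M3 :=
  (q₄ ^ 2 - q ⬝ᵥ q) • (1 : M3) + (2 : ℝ) • Matrix.vecMulVec q q + (2 * q₄) • hat q

/-- Let `S = diag[s₁,s₂,s₃]` be a real diagonal 3×3 matrix.  For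
`x = (q, q₄) ∈ ℝ⁴`, `tr(S·Q(x)) = xᵀ B x`, where `B ∈ ℝ^{4×4}` is the
block-diagonal matrix with upper-left block `2S − tr(S)I₃` and lower-right entry
`tr(S)`, i.e. `B = diag[2s₁−t, 2s₂−t, 2s₃−t, t]` with `t = s₁+s₂+s₃`. -/
theorem trace_diagonal_mul_quatMatrix (s₁ s₂ s₃ : ℝ) (q : Fin 3 → ℝ) (q₄ : ℝ) :
    (Matrix.diagonal ![s₁, s₂, s₃] * quatMatrix q q₄).trace =
      (![q 0, q 1, q 2, q₄]) ⬝ᵥ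
        (Matrix.diagonal
            ![2 * s₁ - (s₁ + s₂ + s₃), 2 * s₂ - (s₁ + s₂ + s₃),
              2 * s₃ - (s₁ + s₂ + s₃), s₁ + s₂ + s₃] *ᵥ ![q 0, q 1, q 2, q₄]) := by
  simp [quatMatrix, hat, Matrix.trace, Matrix.mul_apply, Matrix.mulVec, dotProduct,
    Matrix.vecMulVec_apply, Matrix.diagonal, Fin.sum_univ_succ, Matrix.one_apply]
  ring

end
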